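/- arXiv:0706.1744 — 2 statements merged into one kernel-verified Lean document; each statement's English description precedes it below -/
import Mathlib

section
/- Let Q₁, Q₂, Q₃, Q₄ : Ω → ℂ be four C¹ solutions of the complex Riccati equation ∂_z̄ Q + |Q|² = ν/4 (with the same real-valued ν), such that Q₁ − Q₂, Q₃ − Q₄, Q₁ − Q₄, and Q₃ − Q₂ vanish nowhere on Ω. Then the following Picard-type identity holds on Ω: [∂_z̄(Q₁−Q₂) + 2i·Im(conj(Q₁)·Q₂)]/(Q₁−Q₂) + [∂_z̄(Q₃−Q₄) + 2i·Im(conj(Q₃)·Q₄)]/(Q₃−Q₄) − [∂_z̄(Q₁−Q₄) + 2i·Im(conj(Q₁)·Q₄)]/(Q₁−Q₄) − [∂_z̄(Q₃−Q₂) + 2i·Im(conj(Q₃)·Q₂)]/(Q₃−Q₂) = 0. -/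
open Complex Set

/-- Partial derivative in the x-direction. -/
noncomputable def pdx (F : ℂ → ℂ) (z : ℂ) : ℂ := fderiv ℝ F z 1
/-- Partial derivative in the y-direction. -/
noncomputable def pdy (F : ℂ → ℂ) (z : ℂ) : ℂ := fderiv ℝ F z Complex.I
/-- Wirtinger derivative ∂_z = (1/2)(∂_x − i∂_y). -/
noncomputable def dz (F : ℂ → ℂ) (z : ℂ) : ℂ := (pdx F z - Complex.I * pdy F z) / 2
/-- Wirtinger derivative ∂_z̄ = (1/2)(∂_x + i∂_y). -/
noncomputable def dzbar (F : ℂ → ℂ) (z : ℂ) : ℂ := (pdx F z + Complex.I * pdy F z) / 2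
/-- Laplacian Δ = ∂_xx + ∂_yy. -/
noncomputable def lap (F : ℂ → ℂ) (z : ℂ) : ℂ := pdx (pdx F) z + pdy (pdy F) z

/-! Subtracting the Riccati equations of `Qᵢ` and `Qⱼ` gives
`∂_z̄(Qᵢ - Qⱼ) = |Qⱼ|² - |Qᵢ|²`, and `|Qⱼ|² - |Qᵢ|² + 2i·Im(conj Qᵢ·Qⱼ) = -(conj Qᵢ + conj Qⱼ)(Qᵢ - Qⱼ)`.
So each quotient equals `-(conj Qᵢ + conj Qⱼ)`, and these cancel in the alternating sum. -/

lemma dzbar_sub {F G : ℂ → ℂ} {z : ℂ} (hF : DifferentiableAt ℝ F z)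
    (hG : DifferentiableAt ℝ G z) :
    dzbar (fun w => F w - G w) z = dzbar F z - dzbar G z := by
  simp only [dzbar, pdx, pdy, fderiv_fun_sub hF hG, sub_apply]
  ring

lemma dzbar_sub_of_riccati {P R : ℂ → ℂ} {z c : ℂ} (hP : DifferentiableAt ℝ P z)
    (hR : DifferentiableAt ℝ R z) (hPc : dzbar P z + (‖P z‖ ^ 2 : ℂ) = c)
    (hRc : dzbar R z + (‖R z‖ ^ 2 : ℂ) = c) :
    dzbar (fun w => P w - R w) z = (‖R z‖ ^ 2 : ℂ) - (‖P z‖ ^ 2 : ℂ) := by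
  rw [dzbar_sub hP hR]
  linear_combination hPc - hRc

lemma two_mul_I_mul_im (w : ℂ) : 2 * I * (w.im : ℂ) = w - (starRingEnd ℂ) w := by
  rw [sub_conj]
  push_cast
  ring

lemma sq_norm_sub_sq_norm_add_two_mul_I_mul_im (a b : ℂ) :
    (‖b‖ ^ 2 : ℂ) - (‖a‖ ^ 2 : ℂ) + 2 * I * ((((starRingEnd ℂ) a * b).im : ℂ))
      = -((starRingEnd ℂ) a + (starRingEnd ℂ) b) * (a - b) := by
  rw [two_mul_I_mul_im, ← conj_mul', ← conj_mul', map_mul, conj_conj]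
  ring

lemma riccati_quotient_eq {P R : ℂ → ℂ} {z c : ℂ} (hP : DifferentiableAt ℝ P z)
    (hR : DifferentiableAt ℝ R z) (hPc : dzbar P z + (‖P z‖ ^ 2 : ℂ) = c)
    (hRc : dzbar R z + (‖R z‖ ^ 2 : ℂ) = c) (hne : P z ≠ R z) :
    (dzbar (fun w => P w - R w) z + 2 * I * ((((starRingEnd ℂ) (P z) * R z).im : ℂ)))
        / (P z - R z) = -((starRingEnd ℂ) (P z) + (starRingEnd ℂ) (R z)) := by
  rw [dzbar_sub_of_riccati hP hR hPc hRc, sq_norm_sub_sq_norm_add_two_mul_I_mul_im,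
    mul_div_cancel_right₀ _ (sub_ne_zero.mpr hne)]

theorem picard_identity
    (Ω : Set ℂ) (hΩ : IsOpen Ω) (Q₁ Q₂ Q₃ Q₄ : ℂ → ℂ) (ν : ℂ → ℝ)
    (hQ₁ : ContDiffOn ℝ 1 Q₁ Ω) (hQ₂ : ContDiffOn ℝ 1 Q₂ Ω)
    (hQ₃ : ContDiffOn ℝ 1 Q₃ Ω) (hQ₄ : ContDiffOn ℝ 1 Q₄ Ω)
    (hR₁ : ∀ z ∈ Ω, dzbar Q₁ z + (‖Q₁ z‖ ^ 2 : ℂ) = (ν z : ℂ) / 4)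
    (hR₂ : ∀ z ∈ Ω, dzbar Q₂ z + (‖Q₂ z‖ ^ 2 : ℂ) = (ν z : ℂ) / 4)
    (hR₃ : ∀ z ∈ Ω, dzbar Q₃ z + (‖Q₃ z‖ ^ 2 : ℂ) = (ν z : ℂ) / 4)
    (hR₄ : ∀ z ∈ Ω, dzbar Q₄ z + (‖Q₄ z‖ ^ 2 : ℂ) = (ν z : ℂ) / 4)
    (h12 : ∀ z ∈ Ω, Q₁ z ≠ Q₂ z) (h34 : ∀ z ∈ Ω, Q₃ z ≠ Q₄ z)
    (h14 : ∀ z ∈ Ω, Q₁ z ≠ Q₄ z) (h32 : ∀ z ∈ Ω, Q₃ z ≠ Q₂ z) :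
    ∀ z ∈ Ω,
      (dzbar (fun w => Q₁ w - Q₂ w) z
          + 2 * Complex.I * ((((starRingEnd ℂ) (Q₁ z) * Q₂ z).im : ℂ)))
        / (Q₁ z - Q₂ z)
      + (dzbar (fun w => Q₃ w - Q₄ w) z
          + 2 * Complex.I * ((((starRingEnd ℂ) (Q₃ z) * Q₄ z).im : ℂ)))
        / (Q₃ z - Q₄ z)
      - (dzbar (fun w => Q₁ w - Q₄ w) z
          + 2 * Complex.I * ((((starRingEnd ℂ) (Q₁ z) * Q₄ z).im : ℂ)))
        / (Q₁ z - Q₄ z)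
      - (dzbar (fun w => Q₃ w - Q₂ w) z
          + 2 * Complex.I * ((((starRingEnd ℂ) (Q₃ z) * Q₂ z).im : ℂ)))
        / (Q₃ z - Q₂ z)
      = 0 := by
  intro z hz
  have hd : ∀ {Q : ℂ → ℂ}, ContDiffOn ℝ 1 Q Ω → DifferentiableAt ℝ Q z := fun hQ =>
    (hQ.contDiffAt (hΩ.mem_nhds hz)).differentiableAt one_ne_zero
  rw [riccati_quotient_eq (hd hQ₁) (hd hQ₂) (hR₁ z hz) (hR₂ z hz) (h12 z hz),
    riccati_quotient_eq (hd hQ₃) (hd hQ₄) (hR₃ z hz) (hR₄ z hz) (h34 z hz),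
    riccati_quotient_eq (hd hQ₁) (hd hQ₄) (hR₁ z hz) (hR₄ z hz) (h14 z hz),
    riccati_quotient_eq (hd hQ₃) (hd hQ₂) (hR₃ z hz) (hR₂ z hz) (h32 z hz)]
  ring
end

section
/- Let f : Ω → ℝ be a positive C² function on an open set Ω ⊆ ℂ and let W = W₁ + iW₂ : Ω → ℂ be a C¹ solution of the main Vekua equation ∂_z̄ W = (∂_z̄ f / f)·conj(W). Then the real part u = W₁ satisfies the Schrödinger equation Δu = ν·u with ν = (Δf)/f, and the imaginary part v = W₂ satisfies Δv = η·v with η = 2(|∇f|/f)² − ν, assuming W is C². -/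
open Complex Set

/-
With α = ∂_z̄ f / f, the Vekua equation reads ∂_z̄ W = α W̄. Since Δ = 4 ∂_z ∂_z̄ and
∂_z W̄ = conj (∂_z̄ W) = ᾱ W, applying ∂_z gives ΔW = 4 (∂_z α) W̄ + 4 |α|² W, and the quotient
rule turns this into ΔW = (ν - q) W̄ + q W with q = |∇f|² / f², using |∂_z̄ f|² = |∇f|² / 4 for
real f. Both coefficients are real, and Δ commutes with the real-linear maps Re and Im, so
Δu = ((ν - q) + q) u = ν u and Δv = (q - (ν - q)) v = (2q - ν) v.
-/
open scoped ComplexConjugate Topology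

section DirectionalDerivatives

variable {E : Type*} [NormedAddCommGroup E] [NormedSpace ℝ E]

-- No differentiability is needed: conjugation is a continuous ℝ-linear equivalence.
theorem fderiv_conj_apply (G : E → ℂ) (z v : E) :
    fderiv ℝ (fun w => conj (G w)) z v = conj (fderiv ℝ G z v) := by
  change fderiv ℝ (fun w => star (G w)) z v = star (fderiv ℝ G z v)
  rw [fderiv_star]
  rfl

theorem conj_fderiv_apply_of_forall_conj_eq {G : E → ℂ} (hG : ∀ w, conj (G w) = G w)
    (z v : E) : conj (fderiv ℝ G z v) = fderiv ℝ G z v := by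
  rw [← fderiv_conj_apply]
  simp only [hG]

theorem ContinuousLinearMap.fderiv_comp_apply {F F' : Type*} [NormedAddCommGroup F]
    [NormedSpace ℝ F] [NormedAddCommGroup F'] [NormedSpace ℝ F'] (L : F →L[ℝ] F') {G : E → F} {z : E}
    (hG : DifferentiableAt ℝ G z) (v : E) :
    fderiv ℝ (fun w => L (G w)) z v = L (fderiv ℝ G z v) := by
  change fderiv ℝ (L ∘ G) z v = _
  rw [(L.hasFDerivAt.comp z hG.hasFDerivAt).fderiv]
  rfl

theorem fderiv_mul_apply {𝔸 : Type*} [NormedCommRing 𝔸] [NormedAlgebra ℝ 𝔸] {A B : E → 𝔸}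
    {z : E} (hA : DifferentiableAt ℝ A z) (hB : DifferentiableAt ℝ B z) (v : E) :
    fderiv ℝ (fun w => A w * B w) z v = fderiv ℝ A z v * B z + A z * fderiv ℝ B z v := by
  rw [fderiv_fun_mul hA hB]
  simp only [add_apply, smul_apply, smul_eq_mul]
  ring

theorem fderiv_div_apply {𝕜 : Type*} [NormedField 𝕜] [NormedAlgebra ℝ 𝕜] {A B : E → 𝕜}
    {z : E} (hA : DifferentiableAt ℝ A z) (hB : DifferentiableAt ℝ B z) (hB0 : B z ≠ 0)
    (v : E) :
    fderiv ℝ (fun w => A w / B w) z v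
      = (fderiv ℝ A z v * B z - A z * fderiv ℝ B z v) / B z ^ 2 := by
  have hinv : fderiv ℝ (fun w => (B w)⁻¹) z v = -(B z)⁻¹ * fderiv ℝ B z v * (B z)⁻¹ := by
    change fderiv ℝ (Inv.inv ∘ B) z v = _
    rw [((hasFDerivAt_inv' (𝕜 := ℝ) hB0).comp z hB.hasFDerivAt).fderiv]
    simp [ContinuousLinearMap.mulLeftRight_apply]
  simp only [div_eq_mul_inv]
  rw [fderiv_mul_apply (B := fun w => (B w)⁻¹) hA (hB.inv hB0), hinv]
  field_simp
  ring

theorem differentiableAt_fderiv_apply {F : Type*} [NormedAddCommGroup F] [NormedSpace ℝ F]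
    {G : E → F} {z : E} (hG : ContDiffAt ℝ 2 G z) (v : E) :
    DifferentiableAt ℝ (fun w => fderiv ℝ G w v) z :=
  ((hG.fderiv_right (m := 1) (by norm_num)).differentiableAt one_ne_zero).clm_apply
    (differentiableAt_const v)

theorem fderiv_fderiv_apply_comm {F : Type*} [NormedAddCommGroup F] [NormedSpace ℝ F]
    {G : E → F} {z : E} (hG : ContDiffAt ℝ 2 G z) (u v : E) :
    fderiv ℝ (fun w => fderiv ℝ G w v) z u = fderiv ℝ (fun w => fderiv ℝ G w u) z v := by
  have hd := (hG.fderiv_right (m := 1) (by norm_num)).differentiableAt one_ne_zero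
  rw [fderiv_clm_apply hd (differentiableAt_const v),
    fderiv_clm_apply hd (differentiableAt_const u)]
  simpa using hG.isSymmSndFDerivAt (by simp) u v

end DirectionalDerivatives

section Wirtinger

variable {G H : ℂ → ℂ} {z : ℂ}

theorem dz_conj (G : ℂ → ℂ) (z : ℂ) : dz (fun w => conj (G w)) z = conj (dzbar G z) := by
  simp only [dz, dzbar, pdx, pdy, fderiv_conj_apply, map_div₀, map_add, map_mul, conj_I,
    map_ofNat]
  ring

theorem dz_eq_conj_dzbar_of_forall_conj_eq (hG : ∀ w, conj (G w) = G w) (z : ℂ) :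
    dz G z = conj (dzbar G z) := by
  rw [← dz_conj]
  simp only [hG]

theorem conj_pdx_of_forall_conj_eq (hG : ∀ w, conj (G w) = G w) (z : ℂ) :
    conj (pdx G z) = pdx G z :=
  conj_fderiv_apply_of_forall_conj_eq hG z 1

theorem conj_pdy_of_forall_conj_eq (hG : ∀ w, conj (G w) = G w) (z : ℂ) :
    conj (pdy G z) = pdy G z :=
  conj_fderiv_apply_of_forall_conj_eq hG z I

theorem conj_lap_of_forall_conj_eq (hG : ∀ w, conj (G w) = G w) (z : ℂ) :
    conj (lap G z) = lap G z := by
  rw [lap, map_add, conj_pdx_of_forall_conj_eq (conj_pdx_of_forall_conj_eq hG),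
    conj_pdy_of_forall_conj_eq (conj_pdy_of_forall_conj_eq hG)]

theorem dz_mul (hG : DifferentiableAt ℝ G z) (hH : DifferentiableAt ℝ H z) :
    dz (fun w => G w * H w) z = dz G z * H z + G z * dz H z := by
  simp only [dz, pdx, pdy, fderiv_mul_apply hG hH]
  ring

theorem dz_div (hG : DifferentiableAt ℝ G z) (hH : DifferentiableAt ℝ H z) (hH0 : H z ≠ 0) :
    dz (fun w => G w / H w) z = (dz G z * H z - G z * dz H z) / H z ^ 2 := by
  simp only [dz, pdx, pdy, fderiv_div_apply hG hH hH0]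
  ring

theorem dzbar_mul_dz (G : ℂ → ℂ) (z : ℂ) :
    dzbar G z * dz G z = (pdx G z ^ 2 + pdy G z ^ 2) / 4 := by
  simp only [dz, dzbar]
  linear_combination (-pdy G z ^ 2 / 4) * I_sq

theorem Filter.EventuallyEq.dz_eq (h : G =ᶠ[𝓝 z] H) : dz G z = dz H z := by
  simp only [dz, pdx, pdy, h.fderiv_eq]

theorem differentiableAt_dzbar (hG : ContDiffAt ℝ 2 G z) : DifferentiableAt ℝ (dzbar G) z := by
  unfold dzbar pdx pdy
  have hx := differentiableAt_fderiv_apply hG 1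
  have hy := differentiableAt_fderiv_apply hG I
  fun_prop

theorem fderiv_dzbar_apply (hG : ContDiffAt ℝ 2 G z) (v : ℂ) :
    fderiv ℝ (dzbar G) z v = (fderiv ℝ (pdx G) z v + I * fderiv ℝ (pdy G) z v) / 2 := by
  have hx := differentiableAt_fderiv_apply hG 1
  have hy := differentiableAt_fderiv_apply hG I
  unfold dzbar pdx pdy
  simp only [div_eq_mul_inv]
  rw [fderiv_mul_const (hx.fun_add (hy.const_mul I)), fderiv_fun_add hx (hy.const_mul I),
    fderiv_const_mul hy]
  simp only [smul_apply, add_apply, smul_eq_mul]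
  ring

theorem lap_eq_four_mul_dz_dzbar (hG : ContDiffAt ℝ 2 G z) : lap G z = 4 * dz (dzbar G) z := by
  have hsymm : pdy (pdx G) z = pdx (pdy G) z := fderiv_fderiv_apply_comm hG I 1
  have hx : pdx (dzbar G) z = (pdx (pdx G) z + I * pdx (pdy G) z) / 2 := fderiv_dzbar_apply hG 1
  have hy : pdy (dzbar G) z = (pdy (pdx G) z + I * pdy (pdy G) z) / 2 := fderiv_dzbar_apply hG I
  rw [lap, dz, hx, hy, hsymm]
  linear_combination pdy (pdy G) z * I_sq

theorem ContinuousLinearMap.lap_comp (L : ℂ →L[ℝ] ℂ) (hG : ContDiffAt ℝ 2 G z) :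
    lap (fun w => L (G w)) z = L (lap G z) := by
  have hpd : ∀ v, (fun w => fderiv ℝ (fun x => L (G x)) w v) =ᶠ[𝓝 z]
      fun w => L (fderiv ℝ G w v) :=
    fun v => (hG.eventually (by simp)).mono fun w hw =>
      L.fderiv_comp_apply (hw.differentiableAt two_ne_zero) v
  unfold lap pdx pdy
  simp only [(hpd _).fderiv_eq, L.fderiv_comp_apply (differentiableAt_fderiv_apply hG _),
    map_add]

theorem lap_ofReal_re (hG : ContDiffAt ℝ 2 G z) :
    lap (fun w => ((G w).re : ℂ)) z = ((lap G z).re : ℂ) :=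
  (ofRealCLM.comp reCLM).lap_comp hG

theorem lap_ofReal_im (hG : ContDiffAt ℝ 2 G z) :
    lap (fun w => ((G w).im : ℂ)) z = ((lap G z).im : ℂ) :=
  (ofRealCLM.comp imCLM).lap_comp hG

end Wirtinger

theorem ofReal_re_mul_conj_add_mul {a b : ℂ} (ha : conj a = a) (hb : conj b = b) (w : ℂ) :
    ((a * conj w + b * w).re : ℂ) = (a + b) * (w.re : ℂ) := by
  obtain ⟨r, rfl⟩ := conj_eq_iff_real.mp ha
  obtain ⟨s, rfl⟩ := conj_eq_iff_real.mp hb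
  simp only [add_re, re_ofReal_mul, conj_re]
  push_cast
  ring

theorem ofReal_im_mul_conj_add_mul {a b : ℂ} (ha : conj a = a) (hb : conj b = b) (w : ℂ) :
    ((a * conj w + b * w).im : ℂ) = (b - a) * (w.im : ℂ) := by
  obtain ⟨r, rfl⟩ := conj_eq_iff_real.mp ha
  obtain ⟨s, rfl⟩ := conj_eq_iff_real.mp hb
  simp only [add_im, im_ofReal_mul, conj_im]
  push_cast
  ring

section Vekua

variable {F W : ℂ → ℂ} {z : ℂ}

theorem dz_dzbar_div_self (hF : ContDiffAt ℝ 2 F z) (hF0 : F z ≠ 0) :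
    dz (fun w => dzbar F w / F w) z = lap F z / (4 * F z) - dzbar F z * dz F z / F z ^ 2 := by
  rw [dz_div (differentiableAt_dzbar hF) (hF.differentiableAt two_ne_zero) hF0,
    lap_eq_four_mul_dz_dzbar hF]
  field_simp

theorem lap_eq_of_vekua (hreal : ∀ w, conj (F w) = F w) (hF : ContDiffAt ℝ 2 F z)
    (hF0 : F z ≠ 0) (hW : ContDiffAt ℝ 2 W z)
    (hV : dzbar W =ᶠ[𝓝 z] fun w => dzbar F w / F w * conj (W w)) :
    lap W z = (lap F z / F z - (pdx F z ^ 2 + pdy F z ^ 2) / F z ^ 2) * conj (W z)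
      + (pdx F z ^ 2 + pdy F z ^ 2) / F z ^ 2 * W z := by
  have hα : DifferentiableAt ℝ (fun w => dzbar F w / F w) z := by
    simp only [div_eq_mul_inv]
    exact (differentiableAt_dzbar hF).fun_mul ((hF.differentiableAt two_ne_zero).fun_inv hF0)
  have hconjW : DifferentiableAt ℝ (fun w => conj (W w)) z :=
    (hW.differentiableAt two_ne_zero).star
  have hconjV : conj (dzbar W z) = dz F z / F z * W z := by
    rw [hV.eq_of_nhds, map_mul, map_div₀, conj_conj, hreal,
      ← dz_eq_conj_dzbar_of_forall_conj_eq hreal]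
  calc lap W z = 4 * dz (fun w => dzbar F w / F w * conj (W w)) z := by
        rw [lap_eq_four_mul_dz_dzbar hW, hV.dz_eq]
    _ = 4 * ((lap F z / (4 * F z) - dzbar F z * dz F z / F z ^ 2) * conj (W z)
          + dzbar F z / F z * (dz F z / F z * W z)) := by
        rw [dz_mul hα hconjW, dz_conj, hconjV, dz_dzbar_div_self hF hF0]
    _ = _ := by
        linear_combination (4 * (W z - conj (W z)) / F z ^ 2) * dzbar_mul_dz F z

theorem lap_re_and_lap_im_of_vekua (hreal : ∀ w, conj (F w) = F w) (hF : ContDiffAt ℝ 2 F z)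
    (hF0 : F z ≠ 0) (hW : ContDiffAt ℝ 2 W z)
    (hV : dzbar W =ᶠ[𝓝 z] fun w => dzbar F w / F w * conj (W w)) :
    lap (fun w => ((W w).re : ℂ)) z = lap F z / F z * (W z).re ∧
      lap (fun w => ((W w).im : ℂ)) z
        = (2 * (pdx F z ^ 2 + pdy F z ^ 2) / F z ^ 2 - lap F z / F z) * (W z).im := by
  have hq : conj ((pdx F z ^ 2 + pdy F z ^ 2) / F z ^ 2)
      = (pdx F z ^ 2 + pdy F z ^ 2) / F z ^ 2 := by
    simp only [map_div₀, map_add, map_pow, conj_pdx_of_forall_conj_eq hreal,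
      conj_pdy_of_forall_conj_eq hreal, hreal]
  have hν : conj (lap F z / F z - (pdx F z ^ 2 + pdy F z ^ 2) / F z ^ 2)
      = lap F z / F z - (pdx F z ^ 2 + pdy F z ^ 2) / F z ^ 2 := by
    rw [map_sub, hq, map_div₀, conj_lap_of_forall_conj_eq hreal, hreal]
  rw [lap_ofReal_re hW, lap_ofReal_im hW, lap_eq_of_vekua hreal hF hF0 hW hV,
    ofReal_re_mul_conj_add_mul hν hq, ofReal_im_mul_conj_add_mul hν hq]
  constructor <;> ring

end Vekua

theorem vekua_to_schrodinger
    (Ω : Set ℂ) (hΩ : IsOpen Ω) (f : ℂ → ℝ) (W : ℂ → ℂ)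
    (hf : ContDiffOn ℝ 2 (fun z => (f z : ℂ)) Ω)
    (hfpos : ∀ z ∈ Ω, 0 < f z)
    (hW : ContDiffOn ℝ 2 W Ω)
    (hVekua : ∀ z ∈ Ω,
      dzbar W z = dzbar (fun w => (f w : ℂ)) z / (f z : ℂ) * (starRingEnd ℂ) (W z)) :
    ∀ z ∈ Ω,
      lap (fun w => (((W w).re : ℂ))) z
        = (lap (fun w => (f w : ℂ)) z / (f z : ℂ)) * (((W z).re : ℂ))
      ∧
      lap (fun w => (((W w).im : ℂ))) z
        = (2 * ((pdx (fun w => (f w : ℂ)) z) ^ 2 + (pdy (fun w => (f w : ℂ)) z) ^ 2)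
              / ((f z : ℂ)) ^ 2
            - lap (fun w => (f w : ℂ)) z / (f z : ℂ)) * (((W z).im : ℂ)) := by
  intro z hz
  exact lap_re_and_lap_im_of_vekua (fun w => conj_ofReal (f w)) (hf.contDiffAt (hΩ.mem_nhds hz))
    (ofReal_ne_zero.mpr (hfpos z hz).ne') (hW.contDiffAt (hΩ.mem_nhds hz))
    (Filter.eventuallyEq_of_mem (hΩ.mem_nhds hz) hVekua)
end
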